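/- Let A be a Cartan matrix on a nonempty finite set S. If A is of negative (resp. zero, resp. positive) type, then there exists a vector X = (X_s)_{s∈S} ∈ ℝ^S with X_s > 0 for all s ∈ S such that (AX)_s < 0 (resp. (AX)_s = 0, resp. (AX)_s > 0) for all s ∈ S. -/

import Mathlib

/-!
Common definitions: Cartan matrices, Vinberg's Coxeter polytopes, faces,
the Hilbert metric and Busemann (Hausdorff) measure, reflection groups,
Vinberg domains, proximal limit sets, joins.
-/

open scoped Classical LinearAlgebra.Projectivization Pointwise ENNReal
noncomputable section

/-- The quotient topology on a projective space. -/
instance projTop {K : Type*} [DivisionRing K] {V : Type*} [AddCommGroup V] [Module K V]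
    [TopologicalSpace V] : TopologicalSpace (ℙ K V) :=
  inferInstanceAs (TopologicalSpace (Quotient (projectivizationSetoid K V)))

/-! ## Cartan matrices -/

/-- A Cartan matrix. -/
def IsCartanMatrix {S : Type*} (A : Matrix S S ℝ) : Prop :=
  (∀ s, A s s = 2) ∧
  (∀ s t, s ≠ t → A s t ≤ 0) ∧
  (∀ s t, s ≠ t → (A s t = 0 ↔ A t s = 0)) ∧
  (∀ s t, s ≠ t →
    4 ≤ A s t * A t s ∨ ∃ k : ℕ, 2 ≤ k ∧ A s t * A t s = 4 * Real.cos (Real.pi / k) ^ 2)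

/-- The graph on `S` with an edge `{s,t}` whenever `A s t ≠ 0` (`s ≠ t`). -/
def cartanGraph {S : Type*} (A : Matrix S S ℝ) : SimpleGraph S where
  Adj s t := s ≠ t ∧ (A s t ≠ 0 ∨ A t s ≠ 0)
  symm := ⟨fun _ _ h => ⟨h.1.symm, h.2.symm⟩⟩
  loopless := ⟨fun _ h => h.1 rfl⟩

/-- The principal submatrix of `A` with rows and columns in `T`. -/
def submat {S : Type*} (A : Matrix S S ℝ) (T : Set S) : Matrix T T ℝ :=
  Matrix.of fun s t => A s t

/-- `T` is an irreducible component of `S` (for the matrix `A`): it is the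
vertex set of a connected component of the graph of `A`. -/
def IsIrredComponent {S : Type*} (A : Matrix S S ℝ) (T : Set S) : Prop :=
  ∃ c : (cartanGraph A).ConnectedComponent, T = c.supp

/-- The spectral radius of a real matrix: the supremum of the moduli of its
complex eigenvalues. -/
def specRad {n : Type*} [Fintype n] [DecidableEq n] (M : Matrix n n ℝ) : ℝ :=
  sSup {r : ℝ | ∃ μ : ℂ, (M.map fun a => (a : ℂ)).charpoly.IsRoot μ ∧ r = ‖μ‖}

/-- The Perron–Frobenius eigenvalue `λ_A = 2 - ρ(2·Id - A)` of a Cartan matrix. -/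
def lambdaPF {n : Type*} [Fintype n] [DecidableEq n] (M : Matrix n n ℝ) : ℝ :=
  2 - specRad ((2 : ℝ) • (1 : Matrix n n ℝ) - M)

/-- A Cartan matrix is of positive type if all its irreducible components are. -/
def IsPosType {S : Type*} [Fintype S] (A : Matrix S S ℝ) : Prop :=
  ∀ T : Set S, IsIrredComponent A T → 0 < lambdaPF (submat A T)

/-- A Cartan matrix is of zero type if all its irreducible components are. -/
def IsZeroType {S : Type*} [Fintype S] (A : Matrix S S ℝ) : Prop :=
  ∀ T : Set S, IsIrredComponent A T → lambdaPF (submat A T) = 0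

/-- A Cartan matrix is of negative type if all its irreducible components are. -/
def IsNegType {S : Type*} [Fintype S] (A : Matrix S S ℝ) : Prop :=
  ∀ T : Set S, IsIrredComponent A T → lambdaPF (submat A T) < 0

/-- `T^⊥ = {s | A s t = 0 for all t ∈ T}`. -/
def perpSet {S : Type*} (A : Matrix S S ℝ) (T : Set S) : Set S :=
  {s | ∀ t ∈ T, A s t = 0}

/-- The union of those irreducible components `U` of `T` whose
Perron-Frobenius eigenvalue satisfies the predicate `p`. -/
def partOf {S : Type*} [Fintype S] (A : Matrix S S ℝ) (T : Set S) (p : ℝ → Prop) : Set S :=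
  {s | ∃ h : s ∈ T, ∃ U : Set T, IsIrredComponent (submat A T) U ∧ (⟨s, h⟩ : T) ∈ U ∧
    p (lambdaPF (submat (submat A T) U))}

/-! ## Projective geometry -/

variable {V : Type*} [NormedAddCommGroup V] [NormedSpace ℝ V]

/-- The image of a set `C ⊆ V` in projective space. -/
def projSet (C : Set V) : Set (ℙ ℝ V) :=
  {p | ∃ w ∈ C, ∃ hw : w ≠ 0, Projectivization.mk ℝ w hw = p}

/-- An open projective segment with endpoints `[a]` and `[b]`. -/
def openProjSeg (a b : V) : Set (ℙ ℝ V) :=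
  {p | ∃ u t : ℝ, 0 < u ∧ 0 < t ∧ ∃ h : u • a + t • b ≠ 0, Projectivization.mk ℝ _ h = p}

/-- `x ∼ y` iff `x = y` or some open projective segment contained in `P` contains both. -/
def faceRel (P : Set (ℙ ℝ V)) (x y : ℙ ℝ V) : Prop :=
  x = y ∨ ∃ a b : V, a ≠ 0 ∧ b ≠ 0 ∧ openProjSeg a b ⊆ P ∧
    x ∈ openProjSeg a b ∧ y ∈ openProjSeg a b

/-- The faces of `P` are the equivalence classes of `faceRel`. -/
def IsFace (P f : Set (ℙ ℝ V)) : Prop :=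
  ∃ x ∈ P, f = {y | y ∈ P ∧ faceRel P x y}

/-- The linear span of the cone over a subset of projective space. -/
def spanFace (f : Set (ℙ ℝ V)) : Submodule ℝ V :=
  Submodule.span ℝ {w : V | ∃ hw : w ≠ 0, Projectivization.mk ℝ w hw ∈ f}

/-- `F` is a facet (codimension-one face) of the closed convex set `K`. -/
def IsFacet (K F : Set (ℙ ℝ V)) : Prop :=
  ∃ g, IsFace K g ∧ Module.finrank ℝ (spanFace g) + 1 = Module.finrank ℝ (spanFace K) ∧
    F = closure g

/-- The affine chart of `ℙ(V)` associated with a linear functional `ξ`: a point `x` is sent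
to the representative `w` of `x` with `ξ w = 1` (junk if the line `x` lies in `ker ξ`). -/
def chartMap (ξ : V →ₗ[ℝ] ℝ) (x : ℙ ℝ V) : V :=
  (ξ x.rep)⁻¹ • x.rep

/-- The convex hull of a set `X ⊆ ℙ(V)`, computed in the affine chart of `ξ`. -/
def convexHullIn (ξ : V →ₗ[ℝ] ℝ) (X : Set (ℙ ℝ V))  : Set (ℙ ℝ V) :=
  projSet (convexHull ℝ (chartMap ξ '' X) \ {0})

/-- `ξ` defines an affine chart whose complementary hyperplane misses `Y`. -/
def ChartFor (ξ : V →ₗ[ℝ] ℝ) (Y : Set (ℙ ℝ V)) : Prop :=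
  ∀ x ∈ Y, ξ (Projectivization.rep x) ≠ 0

/-- A sharp open convex cone. -/
def IsPCCone {W : Type*} [NormedAddCommGroup W] [NormedSpace ℝ W] (C : Set W) : Prop :=
  IsOpen C ∧ Convex ℝ C ∧ C.Nonempty ∧ (∀ c : ℝ, 0 < c → ∀ x ∈ C, c • x ∈ C) ∧
    ∀ x : W, x ≠ 0 → ¬(x ∈ closure C ∧ -x ∈ closure C)

/-- A properly convex domain in `ℙ(V)`. -/
def IsPCDomain (Ω : Set (ℙ ℝ V)) : Prop :=
  ∃ C : Set V, IsPCCone C ∧ Ω = projSet (C \ {0})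

/-! ## Hilbert metric and Busemann measure -/

/-- The Hilbert distance on a properly convex domain `Ω`: the projective line through
`x ≠ y` is parametrized by `t ↦ [(1-t)·x̄ + t·ȳ]`; the intersection with `Ω` is the
interval `(sInf T, sSup T) ∋ 0, 1`, and `d(x,y) = ½ log [x':x:y:y']` for the
corresponding boundary points (the factor of an endpoint at infinity being `1`). -/
def hilbertDist (Ω : Set (ℙ ℝ V)) (x y : ℙ ℝ V) : ℝ :=
  if x = y then 0
  else
    (1 / 2) *
      Real.log
        ((if BddBelow {t : ℝ | ∃ h : (1 - t) • x.rep + t • y.rep ≠ 0,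
              Projectivization.mk ℝ _ h ∈ Ω} then
            (1 - sInf {t : ℝ | ∃ h : (1 - t) • x.rep + t • y.rep ≠ 0,
              Projectivization.mk ℝ _ h ∈ Ω}) /
            (0 - sInf {t : ℝ | ∃ h : (1 - t) • x.rep + t • y.rep ≠ 0,
              Projectivization.mk ℝ _ h ∈ Ω})
          else 1) *
         (if BddAbove {t : ℝ | ∃ h : (1 - t) • x.rep + t • y.rep ≠ 0,
              Projectivization.mk ℝ _ h ∈ Ω} then
            sSup {t : ℝ | ∃ h : (1 - t) • x.rep + t • y.rep ≠ 0,
              Projectivization.mk ℝ _ h ∈ Ω} /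
            (sSup {t : ℝ | ∃ h : (1 - t) • x.rep + t • y.rep ≠ 0,
              Projectivization.mk ℝ _ h ∈ Ω} - 1)
          else 1))

/-- The diameter of a set for a distance function. -/
def ediamWith {X : Type*} (ρ : X → X → ℝ) (U : Set X) : ℝ≥0∞ :=
  ⨆ p ∈ U, ⨆ q ∈ U, ENNReal.ofReal (ρ p q)

/-- The `d`-dimensional Hausdorff measure of `A` for the distance function `ρ`. -/
def hausdorffWith {X : Type*} (ρ : X → X → ℝ) (d : ℕ) (A : Set X) : ℝ≥0∞ :=
  ⨆ (δ : ℝ≥0∞) (_ : 0 < δ),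
    ⨅ (U : ℕ → Set X) (_ : A ⊆ ⋃ n, U n) (_ : ∀ n, ediamWith ρ (U n) ≤ δ),
      ∑' n, ediamWith ρ (U n) ^ d

/-- The Busemann measure of `A ∩ Ω`: the `d`-dimensional Hausdorff measure of `A ∩ Ω` in
the metric space `(Ω, d_Ω)`, where `d = dim ℙ(V) = dim V - 1`. -/
def busemann (Ω : Set (ℙ ℝ V)) (A : Set (ℙ ℝ V)) : ℝ≥0∞ :=
  hausdorffWith (fun p q : ↥Ω => hilbertDist Ω ↑p ↑q) (Module.finrank ℝ V - 1)
    {p : ↥Ω | ↑p ∈ A}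

/-! ## Linear actions on projective space, proximality -/

theorem unit_inj (g : (V →ₗ[ℝ] V)ˣ) : Function.Injective (g : V →ₗ[ℝ] V) := by
  intro x y h
  have h2 : ((g⁻¹ : (V →ₗ[ℝ] V)ˣ) : V →ₗ[ℝ] V) (((g : (V →ₗ[ℝ] V)ˣ) : V →ₗ[ℝ] V) x)
      = ((g⁻¹ : (V →ₗ[ℝ] V)ˣ) : V →ₗ[ℝ] V) (((g : (V →ₗ[ℝ] V)ˣ) : V →ₗ[ℝ] V) y) := by
    rw [h]
  rw [← Module.End.mul_apply, ← Module.End.mul_apply, ← Units.val_mul, inv_mul_cancel] at h2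
  simpa using h2

/-- The projective action of an invertible linear map. -/
def pAct (g : (V →ₗ[ℝ] V)ˣ) : ℙ ℝ V → ℙ ℝ V :=
  Projectivization.map (g : V →ₗ[ℝ] V) (unit_inj g)

/-- `g` is proximal with top eigenvalue `lam`: `lam` is a real eigenvalue of algebraic
multiplicity one whose modulus is the maximum of the moduli of the complex eigenvalues. -/
def IsProximalUnit [FiniteDimensional ℝ V] (g : (V →ₗ[ℝ] V)ˣ) (lam : ℝ) : Prop :=
  ((g : V →ₗ[ℝ] V)).charpoly.rootMultiplicity lam = 1 ∧
    ∀ μ : ℂ, (((g : V →ₗ[ℝ] V)).charpoly.map (algebraMap ℝ ℂ)).IsRoot μ → ‖μ‖ ≤ |lam|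

/-- The proximal limit set of a subgroup `Γ ≤ GL(V)`: the closure of the set of attracting
fixed points of the proximal elements of `Γ`. -/
def limitSet [FiniteDimensional ℝ V] (Γ : Subgroup (V →ₗ[ℝ] V)ˣ) : Set (ℙ ℝ V) :=
  closure {p | ∃ g ∈ Γ, ∃ lam : ℝ, IsProximalUnit g lam ∧
    ∃ w : V, ∃ hw : w ≠ 0, (g : V →ₗ[ℝ] V) w = lam • w ∧ Projectivization.mk ℝ w hw = p}

/-- A subgroup is large if it has a finite-index subgroup that surjects onto a
nonabelian free group. -/
def IsLarge {G : Type*} [Group G] (Γ : Subgroup G) : Prop :=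
  ∃ H : Subgroup ↥Γ, H.FiniteIndex ∧ ∃ φ : ↥H →* FreeGroup (Fin 2), Function.Surjective φ

/-! ## Coxeter polytopes -/

/-- A Coxeter polytope: a projective polytope `ℙ(Δ ∖ {0})`, where
`Δ = ⋂ₛ {α_s ≤ 0}` is a sharp polyhedral cone with nonempty interior, each `α_s`
defines a facet of it (facets being distinct for distinct `s`), together with polars
`v_s` such that `α_s (v_s) = 2` and `(α_s (v_t))_{s,t}` is a Cartan matrix. -/
structure CoxPolytope (S : Type*) (V : Type*) [NormedAddCommGroup V] [NormedSpace ℝ V] where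
  α : S → V →ₗ[ℝ] ℝ
  v : S → V
  pairing : ∀ s, α s (v s) = 2
  cartan : IsCartanMatrix (Matrix.of fun s t => α s (v t))
  int_nonempty : (interior (⋂ s, {x : V | α s x ≤ 0})).Nonempty
  sharp : ∀ x : V, x ≠ 0 → x ∈ ⋂ s, {x : V | α s x ≤ 0} → -x ∉ ⋂ s, {x : V | α s x ≤ 0}
  facet : ∀ s, ∃ x : V, α s x = 0 ∧ ∀ t, t ≠ s → α t x < 0

namespace CoxPolytope

variable {S : Type*} (CP : CoxPolytope S V)

/-- The Cartan matrix `A_P` of a Coxeter polytope. -/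
def A : Matrix S S ℝ := Matrix.of fun s t => CP.α s (CP.v t)

/-- The fundamental cone `Δ`. -/
def Δ : Set V := ⋂ s, {x : V | CP.α s x ≤ 0}

/-- The polytope `P = ℙ(Δ ∖ {0}) ⊆ ℙ(V)`. -/
def poly : Set (ℙ ℝ V) := projSet (CP.Δ \ {0})

/-- The reflection `σ_s = Id - α_s ⊗ v_s`. -/
def refl (s : S) : V →ₗ[ℝ] V := LinearMap.id - (CP.α s).smulRight (CP.v s)

/-- The reflection group `Γ_P ≤ GL(V)` generated by the reflections. -/
def reflGroup : Subgroup (V →ₗ[ℝ] V)ˣ :=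
  Subgroup.closure {g | ∃ s, (g : V →ₗ[ℝ] V) = CP.refl s}

/-- The Vinberg domain `Ω_P = Int (⋃_{γ ∈ Γ_P} γ·P)`. -/
def vinbergDomain : Set (ℙ ℝ V) :=
  interior (⋃ γ ∈ CP.reflGroup, pAct γ '' CP.poly)

/-- `S_f = {s ∈ S | f ⊆ ℙ(ker α_s)}`. -/
def SfaceSet (f : Set (ℙ ℝ V)) : Set S :=
  {s | ∀ w : V, ∀ hw : w ≠ 0, Projectivization.mk ℝ w hw ∈ f → CP.α s w = 0}

/-- The Cartan matrix `A_{S_f}` of a face. -/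
def faceMatrix (f : Set (ℙ ℝ V)) : Matrix (CP.SfaceSet f) (CP.SfaceSet f) ℝ :=
  submat CP.A (CP.SfaceSet f)

variable [Fintype S]

/-- A face is elliptic if `A_{S_f}` is of positive type. -/
def FaceElliptic (f : Set (ℙ ℝ V)) : Prop := IsPosType (CP.faceMatrix f)

/-- A face is of zero type if `A_{S_f}` is of zero type. -/
def FaceZero (f : Set (ℙ ℝ V)) : Prop := IsZeroType (CP.faceMatrix f)

/-- A face is of negative type if `A_{S_f}` is of negative type. -/
def FaceNeg (f : Set (ℙ ℝ V)) : Prop := IsNegType (CP.faceMatrix f)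

/-- A face is parabolic if `A_{S_f}` is of zero type of rank `dim V - dim (Span f) - 1`. -/
def FaceParabolic (f : Set (ℙ ℝ V)) : Prop :=
  IsZeroType (CP.faceMatrix f) ∧
    (CP.faceMatrix f).rank + Module.finrank ℝ (spanFace f) + 1 = Module.finrank ℝ V

/-- A Coxeter polytope is quasiperfect if every vertex is elliptic or parabolic. -/
def Quasiperfect : Prop :=
  ∀ f : Set (ℙ ℝ V), IsFace CP.poly f → Module.finrank ℝ (spanFace f) = 1 →
    CP.FaceElliptic f ∨ CP.FaceParabolic f

/-- A boundary face: a nonempty face of `P` contained in `∂Ω_P`. -/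
def BoundaryFace (f : Set (ℙ ℝ V)) : Prop :=
  IsFace CP.poly f ∧ f.Nonempty ∧ f ⊆ frontier CP.vinbergDomain

/-- A maximal boundary face. -/
def MaxBoundaryFace (f : Set (ℙ ℝ V)) : Prop :=
  CP.BoundaryFace f ∧ ∀ g, CP.BoundaryFace g → closure f ⊆ closure g → g = f

/-- A face `f` is perfect if every face `g` with `f ⊆ closure g` of dimension
`dim f + 1` is elliptic. -/
def PerfectFace (f : Set (ℙ ℝ V)) : Prop :=
  ∀ g, IsFace CP.poly g → f ⊆ closure g →
    Module.finrank ℝ (spanFace g) = Module.finrank ℝ (spanFace f) + 1 → CP.FaceElliptic g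

/-- A face is irreducible loxodromic if `A_{S_f}` is irreducible of negative type
and `rank A_{S_f} = dim V - dim (Span f)`. -/
def IrredLoxFace (f : Set (ℙ ℝ V)) : Prop :=
  (cartanGraph (CP.faceMatrix f)).Connected ∧ IsNegType (CP.faceMatrix f) ∧
    (CP.faceMatrix f).rank + Module.finrank ℝ (spanFace f) = Module.finrank ℝ V

/-- The cone `Σ_{s ∈ T} ℝ_{≥0}·v_s`. -/
def nonnegCone (T : Set S) : Set V :=
  {x | ∃ c : S → ℝ, (∀ s, 0 ≤ c s) ∧ (∀ s, s ∉ T → c s = 0) ∧ x = ∑ s, c s • CP.v s}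

/-- A minimal face of negative type. -/
def MinNegFace (f : Set (ℙ ℝ V)) : Prop :=
  IsFace CP.poly f ∧ f.Nonempty ∧ f ≠ interior CP.poly ∧ CP.FaceNeg f ∧
    ∀ g : Set (ℙ ℝ V), IsFace CP.poly g → g.Nonempty → closure g ⊂ closure f → ¬CP.FaceNeg g

/-- A face `f` is the join of the faces `F i`: the spans of the `F i` are independent
with sum `Span f`, and `Δ ∩ Span f = Σᵢ (Δ ∩ Span (F i))`. -/
def FaceIsJoin (f : Set (ℙ ℝ V)) {k : ℕ} (F : Fin k → Set (ℙ ℝ V)) : Prop :=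
  (∀ y : Fin k → V, (∀ i, y i ∈ spanFace (F i)) → (∑ i, y i) = 0 → ∀ i, y i = 0) ∧
  (⨆ i, spanFace (F i)) = spanFace f ∧
  CP.Δ ∩ (spanFace f : Set V) =
    {x | ∃ y : Fin k → V, (∀ i, y i ∈ CP.Δ ∩ (spanFace (F i) : Set V)) ∧ x = ∑ i, y i}

/-- A subset `S'` of `S` defines a face of `P`. -/
def DefinesFace (S' : Set S) : Prop :=
  ∃ x : V, (∀ s ∈ S', CP.α s x = 0) ∧ ∀ s ∉ S', CP.α s x < 0

end CoxPolytope

/-- `CP` is the join of the Coxeter polytopes `Q i ⊆ ℙ(W i)` along the decompositions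
`V = ⊕ᵢ W i` and `S = ⊔ᵢ (fibers of c)`. -/
def IsJoinData {S : Type*} {V : Type*} [NormedAddCommGroup V] [NormedSpace ℝ V]
    (CP : CoxPolytope S V) {k : ℕ} (W : Fin k → Submodule ℝ V) (c : S → Fin k)
    (Q : ∀ i : Fin k, CoxPolytope {s : S // c s = i} ↥(W i)) : Prop :=
  (∀ x : V, ∃ y : Fin k → V, (∀ i, y i ∈ W i) ∧ x = ∑ i, y i) ∧
  (∀ y : Fin k → V, (∀ i, y i ∈ W i) → (∑ i, y i) = 0 → ∀ i, y i = 0) ∧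
  (∀ s : S, CP.v s ∈ W (c s)) ∧
  (∀ s : S, ∀ i : Fin k, i ≠ c s → ∀ x : V, x ∈ W i → CP.α s x = 0) ∧
  (∀ i : Fin k, ∀ s : {s : S // c s = i},
    (∀ x : ↥(W i), (Q i).α s x = CP.α s.1 x) ∧ ((Q i).v s : V) = CP.v s.1)

/-- `Ω` is a join of the properly convex domains `Ω₁ ⊆ ℙ(E₁)` and `Ω₂ ⊆ ℙ(E₂)`. -/
def IsJoinOfDomains {V : Type*} [NormedAddCommGroup V] [NormedSpace ℝ V]
    (E₁ E₂ : Submodule ℝ V) (Ω₁ : Set (ℙ ℝ ↥E₁)) (Ω₂ : Set (ℙ ℝ ↥E₂))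
    (Ω : Set (ℙ ℝ V)) : Prop :=
  ∃ (C₁ : Set ↥E₁) (C₂ : Set ↥E₂), IsPCCone C₁ ∧ IsPCCone C₂ ∧
    Ω₁ = projSet (C₁ \ {0}) ∧ Ω₂ = projSet (C₂ \ {0}) ∧
    ∃ ε₁ ε₂ : Bool,
      Ω = projSet ({x : V | ∃ c₁ ∈ C₁, ∃ c₂ ∈ C₂,
        x = (cond ε₁ 1 (-1) : ℝ) • (c₁ : V) + (cond ε₂ 1 (-1) : ℝ) • (c₂ : V)} \ {0})

end

/-!
On each irreducible component `T`, the matrix `B = 2·Id - A_T` is nonnegative and irreducible,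
so by Perron–Frobenius it has a positive eigenvector `X_T` with eigenvalue `ρ(B)`, that is
`A_T X_T = λ_{A_T} X_T`. Since `A` vanishes between distinct components, the `X_T` glue to a
vector `X > 0` with `(A X)_s = λ_{A_T} X_s` for `s ∈ T`, whose sign is the type of `A`.

The Perron vector is a maximizer of the Collatz–Wielandt function on the image of the standard
simplex under the positive matrix `(1 + B)^(|T| - 1)`; its eigenvalue is `ρ(B)` because
`|μ| |v| ≤ B |v|` entrywise for every complex eigenpair `(μ, v)`.
-/

open Matrix

section PerronFrobenius

variable {n : Type*} [Fintype n]

theorem Matrix.isRoot_charpoly_iff_exists_mulVec_eq_smul [DecidableEq n] {K : Type*} [Field K]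
    (M : Matrix n n K) (μ : K) : M.charpoly.IsRoot μ ↔ ∃ v ≠ 0, M *ᵥ v = μ • v := by
  rw [Polynomial.IsRoot, eval_charpoly, ← exists_mulVec_eq_zero_iff]
  simp only [sub_mulVec, scalar_apply, ← smul_one_eq_diagonal, smul_mulVec, one_mulVec,
    sub_eq_zero, eq_comm]

theorem norm_le_of_isRoot_charpoly_of_pos_eigenvector [DecidableEq n] {B : Matrix n n ℝ}
    (hB : ∀ i j, 0 ≤ B i j) {r : ℝ} {X : n → ℝ} (hX : ∀ i, 0 < X i) (hBX : B *ᵥ X = r • X) {μ : ℂ}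
    (hμ : (B.map ((↑) : ℝ → ℂ)).charpoly.IsRoot μ) : ‖μ‖ ≤ r := by
  obtain ⟨v, hv0, hv⟩ := (isRoot_charpoly_iff_exists_mulVec_eq_smul _ μ).1 hμ
  obtain ⟨j₀, hj₀⟩ := Function.ne_iff.1 hv0
  obtain ⟨i₀, -, hi₀⟩ :=
    Finset.univ.exists_max_image (fun i => ‖v i‖ / X i) ⟨j₀, Finset.mem_univ j₀⟩
  set t := ‖v i₀‖ / X i₀
  have hvt : ∀ j, ‖v j‖ ≤ t * X j := fun j =>
    (div_le_iff₀ (hX j)).1 (hi₀ j (Finset.mem_univ j))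
  have ht : 0 < t := (div_pos (norm_pos_iff.2 hj₀) (hX j₀)).trans_le (hi₀ j₀ (Finset.mem_univ j₀))
  have hμr : ‖μ‖ * (t * X i₀) ≤ r * (t * X i₀) :=
    calc ‖μ‖ * (t * X i₀) = ‖∑ j, (B i₀ j : ℂ) * v j‖ := by
          rw [div_mul_cancel₀ _ (hX i₀).ne', ← norm_mul, ← smul_eq_mul, ← Pi.smul_apply, ← hv]
          rfl
      _ ≤ ∑ j, B i₀ j * ‖v j‖ := by
          refine (norm_sum_le _ _).trans_eq (Finset.sum_congr rfl fun j _ => ?_)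
          rw [norm_mul, Complex.norm_real, Real.norm_of_nonneg (hB i₀ j)]
      _ ≤ ∑ j, B i₀ j * (t * X j) :=
          Finset.sum_le_sum fun j _ => mul_le_mul_of_nonneg_left (hvt j) (hB i₀ j)
      _ = r * (t * X i₀) := by
          rw [mul_left_comm, ← smul_eq_mul r, ← Pi.smul_apply, ← hBX, mulVec, dotProduct,
            Finset.mul_sum]
          exact Finset.sum_congr rfl fun j _ => by ring
  exact le_of_mul_le_mul_right hμr (mul_pos ht (hX i₀))

theorem specRad_eq_of_pos_eigenvector [DecidableEq n] [Nonempty n] {B : Matrix n n ℝ}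
    (hB : ∀ i j, 0 ≤ B i j) {r : ℝ} {X : n → ℝ} (hX : ∀ i, 0 < X i) (hBX : B *ᵥ X = r • X) :
    specRad B = r := by
  have hbound := fun μ => norm_le_of_isRoot_charpoly_of_pos_eigenvector hB hX hBX (μ := μ)
  have hr : (B.map ((↑) : ℝ → ℂ)).charpoly.IsRoot (r : ℂ) := by
    change (B.map (algebraMap ℝ ℂ)).charpoly.IsRoot (algebraMap ℝ ℂ r)
    rw [charpoly_map]
    refine Polynomial.IsRoot.map ((isRoot_charpoly_iff_exists_mulVec_eq_smul B r).2 ⟨X, ?_, hBX⟩)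
    exact fun h => (hX (Classical.arbitrary n)).ne' (congrFun h _)
  have habs : ‖(r : ℂ)‖ = r := by
    rw [Complex.norm_real, Real.norm_eq_abs]
    exact abs_eq_self.2 ((abs_nonneg r).trans (by simpa using hbound r hr))
  exact IsGreatest.csSup_eq ⟨⟨r, hr, habs.symm⟩, fun _ ⟨μ, hμ, h⟩ => h ▸ hbound μ hμ⟩

theorem mulVec_apply_pos_of_pos {C : Matrix n n ℝ} (hC : ∀ i j, 0 < C i j) {x : n → ℝ}
    (hx : ∀ j, 0 ≤ x j) (hx₀ : ∃ j, 0 < x j) (i : n) : 0 < (C *ᵥ x) i := by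
  obtain ⟨j, hj⟩ := hx₀
  exact Finset.sum_pos' (fun k _ => mul_nonneg (hC i k).le (hx k))
    ⟨j, Finset.mem_univ j, mul_pos (hC i j) hj⟩

section CollatzWielandt

variable [Nonempty n]

/-- Only meaningful for `y > 0`: a zero coordinate contributes the junk ratio `0`. -/
noncomputable def collatzWielandt (B : Matrix n n ℝ) (y : n → ℝ) : ℝ :=
  Finset.univ.inf' Finset.univ_nonempty fun i => (B *ᵥ y) i / y i

theorem le_collatzWielandt_iff {B : Matrix n n ℝ} {y : n → ℝ} (hy : ∀ i, 0 < y i) {c : ℝ} :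
    c ≤ collatzWielandt B y ↔ ∀ i, c * y i ≤ (B *ᵥ y) i := by
  simp only [collatzWielandt, Finset.le_inf'_iff, Finset.mem_univ, true_imp_iff,
    le_div_iff₀ (hy _)]

theorem lt_collatzWielandt_iff {B : Matrix n n ℝ} {y : n → ℝ} (hy : ∀ i, 0 < y i) {c : ℝ} :
    c < collatzWielandt B y ↔ ∀ i, c * y i < (B *ᵥ y) i := by
  simp only [collatzWielandt, Finset.lt_inf'_iff, Finset.mem_univ, true_imp_iff,
    lt_div_iff₀ (hy _)]

theorem continuousOn_collatzWielandt (B : Matrix n n ℝ) :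
    ContinuousOn (collatzWielandt B) {y | ∀ i, 0 < y i} :=
  ContinuousOn.finset_inf'_apply _ fun i _ =>
    ((continuous_apply i).comp (continuous_const.matrix_mulVec continuous_id)).continuousOn.div
      (continuous_apply i).continuousOn fun _ hy => (hy i).ne'

theorem collatzWielandt_smul (B : Matrix n n ℝ) (y : n → ℝ) {t : ℝ} (ht : 0 < t) :
    collatzWielandt B (t • y) = collatzWielandt B y := by
  simp only [collatzWielandt, mulVec_smul, Pi.smul_apply, smul_eq_mul,
    mul_div_mul_left _ _ ht.ne']

/-- Maximize the Collatz–Wielandt function over the compact set `C(Δ)` of positive vectors,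
`Δ` the standard simplex. At a maximizer `y` with value `r`, if `B y ≠ r y` then
`C (B y - r y) > 0`, so `C y` has a larger value. -/
theorem exists_pos_eigenvector_of_commute {B C : Matrix n n ℝ} (hC : ∀ i j, 0 < C i j)
    (hCB : Commute C B) : ∃ (r : ℝ) (y : n → ℝ), (∀ i, 0 < y i) ∧ B *ᵥ y = r • y := by
  set K := (C *ᵥ ·) '' stdSimplex ℝ n
  have hK : K ⊆ {y | ∀ i, 0 < y i} := by
    rintro - ⟨x, hx, rfl⟩
    obtain ⟨j, -, hj⟩ : ∃ j ∈ Finset.univ, (0 : n → ℝ) j < x j :=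
      Finset.exists_lt_of_sum_lt (by simp [hx.2])
    exact mulVec_apply_pos_of_pos hC hx.1 ⟨j, hj⟩
  obtain ⟨y, hyK, hmax⟩ :=
    ((isCompact_stdSimplex ℝ n).image (continuous_const.matrix_mulVec continuous_id)).exists_isMaxOn
      ⟨_, _, single_mem_stdSimplex ℝ (Classical.arbitrary n), rfl⟩
      ((continuousOn_collatzWielandt B).mono hK)
  have hy := hK hyK
  set r := collatzWielandt B y
  have hle : ∀ i, r * y i ≤ (B *ᵥ y) i := (le_collatzWielandt_iff hy).1 le_rfl
  refine ⟨r, y, hy, ?_⟩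
  by_contra hne
  have hdiff : ∀ i, 0 ≤ (B *ᵥ y - r • y) i := fun i => sub_nonneg.2 (hle i)
  obtain ⟨j, hj⟩ : ∃ j, 0 < (B *ᵥ y - r • y) j := by
    by_contra! h
    exact hne (funext fun i => le_antisymm (sub_nonpos.1 (h i)) (hle i))
  set z := C *ᵥ y
  have hz : ∀ i, 0 < z i := mulVec_apply_pos_of_pos hC (fun i => (hy i).le) ⟨j, hy j⟩
  have hBz : B *ᵥ z = r • z + C *ᵥ (B *ᵥ y - r • y) := by
    rw [mulVec_sub, mulVec_mulVec, ← hCB.eq, ← mulVec_mulVec, mulVec_smul]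
    abel
  have hlt : r < collatzWielandt B z := (lt_collatzWielandt_iff hz).2 fun i => by
    have := mulVec_apply_pos_of_pos hC hdiff ⟨j, hj⟩ i
    rw [hBz, Pi.add_apply, Pi.smul_apply, smul_eq_mul]
    linarith
  have hσ : 0 < ∑ i, y i := Finset.sum_pos (fun i _ => hy i) Finset.univ_nonempty
  have hzK : (∑ i, y i)⁻¹ • z ∈ K := by
    refine ⟨(∑ i, y i)⁻¹ • y, ⟨fun i => ?_, ?_⟩, mulVec_smul _ _ _⟩
    · exact smul_nonneg (inv_nonneg.2 hσ.le) (hy i).le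
    · simp only [Pi.smul_apply, smul_eq_mul, ← Finset.mul_sum, inv_mul_cancel₀ hσ.ne']
  have hzmax : collatzWielandt B ((∑ i, y i)⁻¹ • z) ≤ r := hmax hzK
  rw [collatzWielandt_smul _ _ (inv_pos.2 hσ)] at hzmax
  exact hlt.not_ge hzmax

end CollatzWielandt

theorem one_add_pow_apply_pos_of_walk [DecidableEq n] {B : Matrix n n ℝ} (hB : ∀ i j, 0 ≤ B i j)
    {G : SimpleGraph n} (hG : ∀ i j, G.Adj i j → 0 < B i j) {k : ℕ} :
    ∀ {i j : n} (p : G.Walk i j), p.length ≤ k → 0 < ((1 + B) ^ k) i j := by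
  have hB₁ : ∀ i j, 0 ≤ (1 + B) i j := fun i j =>
    add_nonneg (by rw [one_apply]; split_ifs <;> norm_num) (hB i j)
  induction k with
  | zero =>
    intro i j p hp
    obtain rfl := SimpleGraph.Walk.eq_of_length_eq_zero (Nat.le_zero.1 hp)
    simp
  | succ k ih =>
    intro i j p hp
    rw [pow_succ', mul_apply]
    refine Finset.sum_pos' (fun l _ => mul_nonneg (hB₁ i l) (pow_apply_nonneg hB₁ k l j)) ?_
    cases p with
    | nil =>
      refine ⟨i, Finset.mem_univ i, mul_pos ?_ (ih .nil (Nat.zero_le k))⟩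
      rw [Matrix.add_apply, one_apply_eq]
      linarith [hB i i]
    | @cons _ u _ h q =>
      refine ⟨u, Finset.mem_univ u, mul_pos ?_ (ih q (by simpa using hp))⟩
      rw [Matrix.add_apply, one_apply_ne (G.ne_of_adj h), zero_add]
      exact hG i u h

theorem exists_pos_mulVec_eq_specRad_smul [DecidableEq n] [Nonempty n] {B : Matrix n n ℝ}
    (hB : ∀ i j, 0 ≤ B i j) {G : SimpleGraph n} (hG : G.Connected)
    (hadj : ∀ i j, G.Adj i j → 0 < B i j) :
    ∃ X : n → ℝ, (∀ i, 0 < X i) ∧ B *ᵥ X = specRad B • X := by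
  have hC : ∀ i j, 0 < ((1 + B) ^ (Fintype.card n - 1)) i j := fun i j =>
    let p := (hG.preconnected i j).some.toPath
    one_add_pow_apply_pos_of_walk hB hadj p.1 (by have := p.2.length_lt; omega)
  obtain ⟨r, X, hX, hBX⟩ := exists_pos_eigenvector_of_commute hC
    (((Commute.one_left B).add_left (Commute.refl B)).pow_left _)
  exact ⟨X, hX, by rw [specRad_eq_of_pos_eigenvector hB hX hBX, hBX]⟩

theorem exists_pos_mulVec_eq_lambdaPF_smul [DecidableEq n] [Nonempty n] {M : Matrix n n ℝ}
    (hdiag : ∀ i, M i i ≤ 2) (hoff : ∀ i j, i ≠ j → M i j ≤ 0)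
    (hzero : ∀ i j, i ≠ j → (M i j = 0 ↔ M j i = 0)) (hM : (cartanGraph M).Connected) :
    ∃ X : n → ℝ, (∀ i, 0 < X i) ∧ M *ᵥ X = lambdaPF M • X := by
  set B := (2 : ℝ) • (1 : Matrix n n ℝ) - M
  have hB : ∀ i j, 0 ≤ B i j := by
    intro i j
    rcases eq_or_ne i j with rfl | h
    · simpa [B] using hdiag i
    · simpa [B, one_apply_ne h] using hoff i j h
  have hadj : ∀ i j, (cartanGraph M).Adj i j → 0 < B i j := by
    rintro i j ⟨h, hne⟩
    have : M i j ≠ 0 := hne.elim id (mt (hzero i j h).1)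
    simpa [B, one_apply_ne h] using (hoff i j h).lt_of_ne this
  obtain ⟨X, hX, hBX⟩ := exists_pos_mulVec_eq_specRad_smul hB hM hadj
  refine ⟨X, hX, ?_⟩
  calc M *ᵥ X = ((2 : ℝ) • (1 : Matrix n n ℝ) - B) *ᵥ X := by rw [sub_sub_cancel]
    _ = lambdaPF M • X := by
      rw [sub_mulVec, smul_mulVec, one_mulVec, hBX, lambdaPF, sub_smul]

end PerronFrobenius

section Components

variable {S : Type*} {A : Matrix S S ℝ}

theorem IsIrredComponent.connected_cartanGraph_submat {T : Set S} (hT : IsIrredComponent A T) :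
    (cartanGraph (submat A T)).Connected := by
  obtain ⟨c, rfl⟩ := hT
  exact c.connected_toSimpleGraph.mono fun a b (h : c.toSimpleGraph.Adj a b) =>
    ⟨fun he => h.1 (congrArg Subtype.val he), h.2⟩

variable [Fintype S]

theorem mulVec_apply_eq_submat_mulVec {T : Set S} {s : S} (hs : s ∈ T)
    (hA : ∀ t ∉ T, A s t = 0) (X : S → ℝ) :
    (A *ᵥ X) s = (submat A T *ᵥ fun t : T => X t) ⟨s, hs⟩ := by
  rw [mulVec, dotProduct, ← Fintype.sum_subtype_add_sum_subtype (· ∈ T),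
    Finset.sum_eq_zero (fun (t : {t // t ∉ T}) _ => by rw [hA t t.2, zero_mul]), add_zero]
  rfl

theorem exists_pos_mulVec_eq_lambdaPF_smul_on_components (hdiag : ∀ s, A s s ≤ 2)
    (hoff : ∀ s t, s ≠ t → A s t ≤ 0) (hzero : ∀ s t, s ≠ t → (A s t = 0 ↔ A t s = 0)) :
    ∃ X : S → ℝ, (∀ s, 0 < X s) ∧ ∀ T, IsIrredComponent A T → ∀ s ∈ T,
      (A *ᵥ X) s = lambdaPF (submat A T) * X s := by
  have hY (T : Set S) (hT : IsIrredComponent A T) : ∃ Y : T → ℝ, (∀ t, 0 < Y t) ∧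
      submat A T *ᵥ Y = lambdaPF (submat A T) • Y :=
    have : Nonempty T := hT.connected_cartanGraph_submat.nonempty
    exists_pos_mulVec_eq_lambdaPF_smul (fun t => hdiag t)
      (fun t u h => hoff t u (Subtype.coe_injective.ne h))
      (fun t u h => hzero t u (Subtype.coe_injective.ne h)) hT.connected_cartanGraph_submat
  choose Y hYpos hY using hY
  have hcomp (s : S) : IsIrredComponent A ((cartanGraph A).connectedComponentMk s).supp :=
    ⟨_, rfl⟩
  set X : S → ℝ := fun s => Y _ (hcomp s) ⟨s, rfl⟩
  have hXY (T : Set S) (hT : IsIrredComponent A T) (t : T) : X t = Y T hT t := by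
    obtain ⟨c, rfl⟩ := hT
    obtain ⟨t, rfl : _ = c⟩ := t
    rfl
  refine ⟨X, fun s => hYpos _ _ _, fun T hT s hs => ?_⟩
  have hvanish : ∀ t ∉ T, A s t = 0 := by
    obtain ⟨c, rfl⟩ := hT
    intro t ht
    by_contra hst
    have hne : s ≠ t := by rintro rfl; exact ht hs
    exact ht ((SimpleGraph.ConnectedComponent.connectedComponentMk_eq_of_adj
      (⟨hne, Or.inl hst⟩ : (cartanGraph A).Adj s t)).symm.trans hs)
  rw [mulVec_apply_eq_submat_mulVec hs hvanish, funext (hXY T hT), hY, Pi.smul_apply,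
    smul_eq_mul, hXY T hT ⟨s, hs⟩]

end Components

theorem statement_16_general {S : Type} [Fintype S]
    (A : Matrix S S ℝ) (hA : IsCartanMatrix A) :
    (IsNegType A → ∃ X : S → ℝ, (∀ s, 0 < X s) ∧ ∀ s, A.mulVec X s < 0) ∧
    (IsZeroType A → ∃ X : S → ℝ, (∀ s, 0 < X s) ∧ ∀ s, A.mulVec X s = 0) ∧
    (IsPosType A → ∃ X : S → ℝ, (∀ s, 0 < X s) ∧ ∀ s, 0 < A.mulVec X s) := by
  obtain ⟨hdiag, hoff, hzero, -⟩ := hA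
  obtain ⟨X, hX, hAX⟩ :=
    exists_pos_mulVec_eq_lambdaPF_smul_on_components (fun s => (hdiag s).le) hoff hzero
  have hcomp (s : S) : IsIrredComponent A ((cartanGraph A).connectedComponentMk s).supp :=
    ⟨_, rfl⟩
  refine ⟨fun h => ⟨X, hX, fun s => ?_⟩, fun h => ⟨X, hX, fun s => ?_⟩,
    fun h => ⟨X, hX, fun s => ?_⟩⟩ <;> rw [hAX _ (hcomp s) s rfl]
  · exact mul_neg_of_neg_of_pos (h _ (hcomp s)) (hX s)
  · rw [h _ (hcomp s), zero_mul]
  · exact mul_pos (h _ (hcomp s)) (hX s)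

/-- **Remark.** Let `A` be a Cartan matrix on a nonempty finite set `S`. If `A` is of
negative (resp. zero, resp. positive) type, then there is a vector `X > 0` in `ℝ^S` with
`AX < 0` (resp. `AX = 0`, resp. `AX > 0`). -/
theorem statement_16 {S : Type} [Fintype S] [DecidableEq S] [Nonempty S]
    (A : Matrix S S ℝ) (hA : IsCartanMatrix A) :
    (IsNegType A → ∃ X : S → ℝ, (∀ s, 0 < X s) ∧ ∀ s, A.mulVec X s < 0) ∧
    (IsZeroType A → ∃ X : S → ℝ, (∀ s, 0 < X s) ∧ ∀ s, A.mulVec X s = 0) ∧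
    (IsPosType A → ∃ X : S → ℝ, (∀ s, 0 < X s) ∧ ∀ s, 0 < A.mulVec X s) :=
  statement_16_general A hA
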